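/- arXiv:2305.04640 — 2 statements merged into one kernel-verified Lean document; each statement's English description precedes it below -/
import Mathlib

section
/- Suppose an enclosure |f(𝕋^d)| ⊆ [a, b] with 0 ≤ a ≤ b holds for a trigonometric polynomial f on 𝕋^d. Then the modulus of f on the complex strip of width ρ satisfies |f(𝕋^d_ρ)| ⊆ [max(a − (‖f‖_{F,ρ} − ‖f‖_{F,0}), 0), b + ‖f‖_{F,ρ} − ‖f‖_{F,0}]. -/
/-!
Write `f(θ + iy) = ∑ₖ cₖ e(k·θ) e^{-2π k·y}`. Since `|e(k·θ)| = 1` and `|k·y| ≤ |k|₁ ρ` on the strip,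
each mode moves by at most `|cₖ| (e^{2π|k|₁ρ} - 1)`, so `|f(θ + iy) - f(θ)| ≤ ‖f‖_{F,ρ} - ‖f‖_{F,0}`.
The enclosure then follows from the reverse triangle inequality.
-/

open Finset

lemma Real.abs_exp_sub_one_le_exp_abs_sub_one (t : ℝ) : |Real.exp t - 1| ≤ Real.exp |t| - 1 := by
  rw [abs_le]
  constructor
  · nlinarith [Real.add_one_le_exp t, Real.add_one_le_exp |t|, neg_abs_le t, abs_nonneg t]
  · linarith [Real.exp_le_exp.mpr (le_abs_self t)]

lemma abs_sum_mul_le_sum_abs_mul {ι : Type*} [Fintype ι] (u y : ι → ℝ) {ρ : ℝ}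
    (hy : ∀ i, |y i| ≤ ρ) : |∑ i, u i * y i| ≤ (∑ i, |u i|) * ρ :=
  calc |∑ i, u i * y i| ≤ ∑ i, |u i * y i| := abs_sum_le_sum_abs _ _
    _ ≤ ∑ i, |u i| * ρ := sum_le_sum fun i _ => by
        rw [abs_mul]; exact mul_le_mul_of_nonneg_left (hy i) (abs_nonneg _)
    _ = (∑ i, |u i|) * ρ := by rw [sum_mul]

lemma norm_mem_Icc_of_norm_sub_le {E : Type*} [SeminormedAddCommGroup E] {u v : E} {a b δ : ℝ}
    (hu : ‖u‖ ∈ Set.Icc a b) (hvu : ‖v - u‖ ≤ δ) : ‖v‖ ∈ Set.Icc (max (a - δ) 0) (b + δ) :=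
  ⟨max_le (by linarith [norm_sub_norm_le u v, norm_sub_rev v u, hu.1]) (norm_nonneg v),
    by linarith [norm_le_norm_add_norm_sub' v u, hu.2]⟩

section TrigPoly

variable {d : ℕ}

noncomputable def fourierMode (k : Fin d → ℤ) (z : Fin d → ℂ) : ℂ :=
  Complex.exp (2 * Real.pi * Complex.I * ∑ ℓ, (k ℓ : ℂ) * z ℓ)

noncomputable def trigPoly (I : Finset (Fin d → ℤ)) (c : (Fin d → ℤ) → ℂ) (z : Fin d → ℂ) : ℂ :=
  ∑ k ∈ I, c k * fourierMode k z

/-- `‖f‖_{F,ρ} = ∑ₖ |cₖ| e^{2π|k|₁ρ}`. -/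
noncomputable def fourierNorm (I : Finset (Fin d → ℤ)) (c : (Fin d → ℤ) → ℂ) (ρ : ℝ) : ℝ :=
  ∑ k ∈ I, ‖c k‖ * Real.exp (2 * Real.pi * (∑ ℓ, |(k ℓ : ℝ)|) * ρ)

lemma fourierNorm_zero (I : Finset (Fin d → ℤ)) (c : (Fin d → ℤ) → ℂ) :
    fourierNorm I c 0 = ∑ k ∈ I, ‖c k‖ := by
  simp [fourierNorm]

lemma norm_fourierMode_ofReal (k : Fin d → ℤ) (θ : Fin d → ℝ) :
    ‖fourierMode k (fun ℓ => (θ ℓ : ℂ))‖ = 1 := by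
  have : 2 * Real.pi * Complex.I * ∑ ℓ, (k ℓ : ℂ) * (θ ℓ : ℂ)
      = ((2 * Real.pi * ∑ ℓ, (k ℓ : ℝ) * θ ℓ : ℝ) : ℂ) * Complex.I := by
    push_cast; ring
  rw [fourierMode, this, Complex.norm_exp_ofReal_mul_I]

lemma fourierMode_add_I_mul (k : Fin d → ℤ) (θ y : Fin d → ℝ) :
    fourierMode k (fun ℓ => (θ ℓ : ℂ) + Complex.I * y ℓ)
      = fourierMode k (fun ℓ => (θ ℓ : ℂ)) * (Real.exp (-(2 * Real.pi * ∑ ℓ, (k ℓ : ℝ) * y ℓ)) : ℂ) := by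
  rw [fourierMode, fourierMode, Complex.ofReal_exp, ← Complex.exp_add]
  congr 1
  push_cast
  simp only [mul_add, sum_add_distrib, mul_sum, ← sum_neg_distrib]
  congr 1
  refine sum_congr rfl fun ℓ _ => ?_
  linear_combination (2 * (Real.pi : ℂ) * k ℓ * y ℓ) * Complex.I_sq

lemma norm_fourierMode_shift_sub_le (k : Fin d → ℤ) (θ y : Fin d → ℝ) {ρ : ℝ}
    (hy : ∀ ℓ, |y ℓ| ≤ ρ) :
    ‖fourierMode k (fun ℓ => (θ ℓ : ℂ) + Complex.I * y ℓ) - fourierMode k (fun ℓ => (θ ℓ : ℂ))‖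
      ≤ Real.exp (2 * Real.pi * (∑ ℓ, |(k ℓ : ℝ)|) * ρ) - 1 := by
  set t := -(2 * Real.pi * ∑ ℓ, (k ℓ : ℝ) * y ℓ)
  have ht : |t| ≤ 2 * Real.pi * (∑ ℓ, |(k ℓ : ℝ)|) * ρ := by
    rw [abs_neg, abs_mul, abs_of_pos Real.two_pi_pos, mul_assoc _ (∑ ℓ, _)]
    exact mul_le_mul_of_nonneg_left (abs_sum_mul_le_sum_abs_mul _ y hy) Real.two_pi_pos.le
  calc _ = |Real.exp t - 1| := by
        rw [fourierMode_add_I_mul, ← mul_sub_one, norm_mul, norm_fourierMode_ofReal, one_mul,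
          ← Complex.ofReal_one, ← Complex.ofReal_sub, Complex.norm_real, Real.norm_eq_abs]
    _ ≤ Real.exp |t| - 1 := Real.abs_exp_sub_one_le_exp_abs_sub_one t
    _ ≤ _ := by linarith [Real.exp_le_exp.mpr ht]

lemma norm_trigPoly_shift_sub_le (I : Finset (Fin d → ℤ)) (c : (Fin d → ℤ) → ℂ)
    (θ y : Fin d → ℝ) {ρ : ℝ} (hy : ∀ ℓ, |y ℓ| ≤ ρ) :
    ‖trigPoly I c (fun ℓ => (θ ℓ : ℂ) + Complex.I * y ℓ) - trigPoly I c (fun ℓ => (θ ℓ : ℂ))‖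
      ≤ fourierNorm I c ρ - fourierNorm I c 0 := by
  rw [trigPoly, trigPoly, ← sum_sub_distrib, fourierNorm_zero, fourierNorm, ← sum_sub_distrib]
  refine (norm_sum_le _ _).trans (sum_le_sum fun k _ => ?_)
  rw [← mul_sub, norm_mul, ← mul_sub_one]
  exact mul_le_mul_of_nonneg_left (norm_fourierMode_shift_sub_le k θ y hy) (norm_nonneg _)

end TrigPoly

theorem stmt6_general (d : ℕ) (ρ : ℝ) (I : Finset (Fin d → ℤ))
    (c : (Fin d → ℤ) → ℂ) (a b : ℝ)
    (henc : ∀ θ : Fin d → ℝ,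
      ‖∑ k ∈ I, c k * Complex.exp (2 * Real.pi * Complex.I * ∑ ℓ, (k ℓ : ℂ) * (θ ℓ : ℂ))‖
        ∈ Set.Icc a b) :
    ∀ θ y : Fin d → ℝ, (∀ ℓ, |y ℓ| ≤ ρ) →
      ‖∑ k ∈ I, c k * Complex.exp (2 * Real.pi * Complex.I *
          ∑ ℓ, (k ℓ : ℂ) * ((θ ℓ : ℂ) + Complex.I * (y ℓ : ℂ)))‖
        ∈ Set.Icc
            (max (a - ((∑ k ∈ I, ‖c k‖ * Real.exp (2 * Real.pi * (∑ ℓ, |(k ℓ : ℝ)|) * ρ))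
                        - ∑ k ∈ I, ‖c k‖)) 0)
            (b + ((∑ k ∈ I, ‖c k‖ * Real.exp (2 * Real.pi * (∑ ℓ, |(k ℓ : ℝ)|) * ρ))
                        - ∑ k ∈ I, ‖c k‖)) := by
  intro θ y hy
  have key := norm_mem_Icc_of_norm_sub_le (henc θ) (norm_trigPoly_shift_sub_le I c θ y hy)
  rwa [fourierNorm_zero] at key

/-- Extending an enclosure of `|f|` on the real torus to the complex strip of width `ρ`
using the Fourier norms. -/
theorem stmt6 (d : ℕ) (ρ : ℝ) (hρ : 0 ≤ ρ) (I : Finset (Fin d → ℤ))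
    (c : (Fin d → ℤ) → ℂ) (a b : ℝ) (ha : 0 ≤ a) (hab : a ≤ b)
    (henc : ∀ θ : Fin d → ℝ,
      ‖∑ k ∈ I, c k * Complex.exp (2 * Real.pi * Complex.I * ∑ ℓ, (k ℓ : ℂ) * (θ ℓ : ℂ))‖
        ∈ Set.Icc a b) :
    ∀ θ y : Fin d → ℝ, (∀ ℓ, |y ℓ| ≤ ρ) →
      ‖∑ k ∈ I, c k * Complex.exp (2 * Real.pi * Complex.I *
          ∑ ℓ, (k ℓ : ℂ) * ((θ ℓ : ℂ) + Complex.I * (y ℓ : ℂ)))‖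
        ∈ Set.Icc
            (max (a - ((∑ k ∈ I, ‖c k‖ * Real.exp (2 * Real.pi * (∑ ℓ, |(k ℓ : ℝ)|) * ρ))
                        - ∑ k ∈ I, ‖c k‖)) 0)
            (b + ((∑ k ∈ I, ‖c k‖ * Real.exp (2 * Real.pi * (∑ ℓ, |(k ℓ : ℝ)|) * ρ))
                        - ∑ k ∈ I, ‖c k‖)) :=
  stmt6_general d ρ I c a b henc
end

section
/- If ω is Diophantine of type (γ, τ) with τ ≥ d, and ξ solves the cohomological equation ξ(θ) − ξ(θ+ω) = f(θ) termwise with ξ_k = f_k/(1 − e^{2πi k·ω}) (f_0 = 0), then for all 0 < δ the Fourier-norm bound ‖ξ‖_{F,ρ−δ} ≤ (γ^{-1} sup_{k≠0} |k|₁^τ e^{−2π|k|₁δ}/4) · ‖f‖_{F,ρ} holds; in particular ‖ξ‖_{F,ρ−δ} ≤ (τ/(2πe))^τ /(4γδ^τ) · ‖f‖_{F,ρ}. -/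
/-!
Termwise `‖ξ_k‖ = ‖f_k‖ / ‖1 - e^{2πi k·ω}‖`, and the chord `‖1 - e^{2πix}‖ = 2|sin πx|` is at least
`4 |x - round x|` by Jordan's inequality, so the Diophantine condition gives
`‖ξ_k‖ ≤ ‖f_k‖ |k|₁^τ / (4γ)`. Shrinking the strip by `δ` therefore costs the factor
`|k|₁^τ e^{-2π|k|₁δ}`, and `x^t e^{-ax} ≤ (t/(ea))^t` follows from `e y ≤ e^y` applied to `y = ax/t`.
-/

open Real

lemma rpow_mul_exp_neg_mul_le {x a t : ℝ} (hx : 0 ≤ x) (ha : 0 < a) (ht : 0 ≤ t) :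
    x ^ t * exp (-(a * x)) ≤ (t / (exp 1 * a)) ^ t := by
  rcases ht.eq_or_lt with rfl | ht
  · simpa using mul_nonneg ha.le hx
  calc x ^ t * exp (-(a * x))
      = (t / (exp 1 * a)) ^ t * ((exp 1 * (a * x / t)) ^ t * exp (-(a * x))) := by
        rw [← mul_assoc, ← mul_rpow (by positivity) (by positivity)]
        field_simp
    _ ≤ (t / (exp 1 * a)) ^ t * (exp (a * x / t) ^ t * exp (-(a * x))) := by
        gcongr
        exact exp_one_mul_le_exp
    _ = (t / (exp 1 * a)) ^ t := by
        rw [← exp_mul, ← exp_add, div_mul_cancel₀ _ ht.ne', add_neg_cancel, exp_zero, mul_one]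

lemma rpow_mul_exp_neg_two_pi_mul_le {x τ δ : ℝ} (hx : 0 ≤ x) (hδ : 0 < δ) (hτ : 0 ≤ τ) :
    x ^ τ * exp (-2 * π * x * δ) ≤ (τ / (2 * π * exp 1)) ^ τ / δ ^ τ := by
  rw [← div_rpow (by positivity) hδ.le, show τ / (2 * π * exp 1) / δ = τ / (exp 1 * (2 * π * δ))
    by ring, show -2 * π * x * δ = -(2 * π * δ * x) by ring]
  exact rpow_mul_exp_neg_mul_le hx (by positivity) hτ

lemma four_mul_abs_sub_round_le_norm_one_sub_exp (x : ℝ) :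
    4 * |x - round x| ≤ ‖1 - Complex.exp (2 * π * Complex.I * x)‖ := by
  have hchord : ‖1 - Complex.exp (2 * π * Complex.I * x)‖ = 2 * |sin (π * x)| := by
    rw [norm_sub_rev, show 2 * π * Complex.I * x = Complex.I * (2 * π * x : ℝ) by push_cast; ring,
      Complex.norm_exp_I_mul_ofReal_sub_one, norm_mul, Real.norm_ofNat, Real.norm_eq_abs,
      mul_div_right_comm, mul_div_cancel_left₀ _ two_ne_zero]
  have hperiodic : |sin (π * x)| = |sin (π * (x - round x))| := by
    rw [mul_sub, mul_comm π (round x : ℝ), sin_sub_int_mul_pi, abs_mul, abs_zpow, abs_neg,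
      abs_one, one_zpow, one_mul]
  have hjordan := mul_abs_le_abs_sin (x := π * (x - round x)) (by
    rw [abs_mul, abs_of_pos pi_pos]
    nlinarith [abs_sub_round x, pi_pos])
  rw [abs_mul, abs_of_pos pi_pos, ← mul_assoc, div_mul_cancel₀ _ pi_ne_zero] at hjordan
  linarith

lemma four_mul_le_norm_one_sub_exp_of_le_abs_sub_int {x b : ℝ} (h : ∀ p : ℤ, b ≤ |x - p|) :
    4 * b ≤ ‖1 - Complex.exp (2 * π * Complex.I * x)‖ :=
  (mul_le_mul_of_nonneg_left (h (round x)) (by norm_num)).trans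
    (four_mul_abs_sub_round_le_norm_one_sub_exp x)

lemma sum_abs_intCast_pos {ι : Type*} [Fintype ι] {k : ι → ℤ} (hk : k ≠ 0) :
    0 < ∑ ℓ, |(k ℓ : ℝ)| := by
  obtain ⟨ℓ, hℓ⟩ := Function.ne_iff.1 hk
  exact Finset.sum_pos' (fun i _ => abs_nonneg _)
    ⟨ℓ, Finset.mem_univ _, abs_pos.2 (Int.cast_ne_zero.2 hℓ)⟩

lemma norm_div_mul_exp_le {a b : ℂ} {γ τ K ρ δ : ℝ} (hγ : 0 < γ) (hK : 0 < K)
    (hb : 4 * (γ / K ^ τ) ≤ ‖b‖) :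
    ‖a / b‖ * exp (2 * π * K * (ρ - δ)) ≤
      γ⁻¹ * (K ^ τ * exp (-2 * π * K * δ)) / 4 * (‖a‖ * exp (2 * π * K * ρ)) := by
  have hdiv : ‖a / b‖ ≤ ‖a‖ / (4 * (γ / K ^ τ)) := by
    rw [norm_div]
    exact div_le_div_of_nonneg_left (norm_nonneg a) (by positivity) hb
  calc ‖a / b‖ * exp (2 * π * K * (ρ - δ))
      ≤ ‖a‖ / (4 * (γ / K ^ τ)) * exp (2 * π * K * (ρ - δ)) := by gcongr
    _ = _ := by
      rw [show 2 * π * K * (ρ - δ) = 2 * π * K * ρ + -2 * π * K * δ by ring, exp_add]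
      field_simp

lemma tsum_le_mul_tsum_of_le {ι : Type*} {f g : ι → ℝ} {C : ℝ} (hg : ∀ i, 0 ≤ g i)
    (hf : Summable f) (h : ∀ i, g i ≤ C * f i) : ∑' i, g i ≤ C * ∑' i, f i := by
  rw [← tsum_mul_left]
  exact (hf.mul_left C).of_nonneg_of_le hg h |>.tsum_le_tsum h (hf.mul_left C)

theorem stmt13_general (d : ℕ) (γ τ ρ δ : ℝ) (hγ : 0 < γ) (hτ : (d : ℝ) ≤ τ)
    (hδ : 0 < δ)
    (ω : Fin d → ℝ)
    (hdio : ∀ q : Fin d → ℤ, q ≠ 0 → ∀ p : ℤ,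
      γ / (∑ ℓ, |(q ℓ : ℝ)|) ^ τ ≤ |(∑ ℓ, ω ℓ * q ℓ) - p|)
    (c : (Fin d → ℤ) → ℂ) (hc0 : c 0 = 0)
    (hsum : Summable fun k : Fin d → ℤ =>
      ‖c k‖ * Real.exp (2 * Real.pi * (∑ ℓ, |(k ℓ : ℝ)|) * ρ))
    (ξ : (Fin d → ℤ) → ℂ) (hξ0 : ξ 0 = 0)
    (hξ : ∀ k : Fin d → ℤ, k ≠ 0 →
      ξ k = c k / (1 - Complex.exp (2 * Real.pi * Complex.I * (∑ ℓ, (k ℓ : ℝ) * ω ℓ)))) :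
    (∑' k : Fin d → ℤ, ‖ξ k‖ * Real.exp (2 * Real.pi * (∑ ℓ, |(k ℓ : ℝ)|) * (ρ - δ)))
      ≤ (γ⁻¹ * (⨆ k : {k : Fin d → ℤ // k ≠ 0},
              (∑ ℓ, |((k : Fin d → ℤ) ℓ : ℝ)|) ^ τ *
                Real.exp (-2 * Real.pi * (∑ ℓ, |((k : Fin d → ℤ) ℓ : ℝ)|) * δ)) / 4) *
          ∑' k : Fin d → ℤ, ‖c k‖ * Real.exp (2 * Real.pi * (∑ ℓ, |(k ℓ : ℝ)|) * ρ) ∧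
    (∑' k : Fin d → ℤ, ‖ξ k‖ * Real.exp (2 * Real.pi * (∑ ℓ, |(k ℓ : ℝ)|) * (ρ - δ)))
      ≤ ((τ / (2 * Real.pi * Real.exp 1)) ^ τ / (4 * γ * δ ^ τ)) *
          ∑' k : Fin d → ℤ, ‖c k‖ * Real.exp (2 * Real.pi * (∑ ℓ, |(k ℓ : ℝ)|) * ρ) := by
  set S := ⨆ k : {k : Fin d → ℤ // k ≠ 0}, (∑ ℓ, |((k : Fin d → ℤ) ℓ : ℝ)|) ^ τ *
    exp (-2 * π * (∑ ℓ, |((k : Fin d → ℤ) ℓ : ℝ)|) * δ)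
  have hτ0 : 0 ≤ τ := (Nat.cast_nonneg d).trans hτ
  have hM : ∀ k : {k : Fin d → ℤ // k ≠ 0}, (∑ ℓ, |((k : Fin d → ℤ) ℓ : ℝ)|) ^ τ *
      exp (-2 * π * (∑ ℓ, |((k : Fin d → ℤ) ℓ : ℝ)|) * δ) ≤
        (τ / (2 * π * exp 1)) ^ τ / δ ^ τ := fun k =>
    rpow_mul_exp_neg_two_pi_mul_le (Finset.sum_nonneg fun ℓ _ => abs_nonneg _) hδ hτ0
  have hpoint : ∀ k : Fin d → ℤ, ‖ξ k‖ * exp (2 * π * (∑ ℓ, |(k ℓ : ℝ)|) * (ρ - δ)) ≤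
      γ⁻¹ * S / 4 * (‖c k‖ * exp (2 * π * (∑ ℓ, |(k ℓ : ℝ)|) * ρ)) := by
    intro k
    rcases eq_or_ne k 0 with rfl | hk
    · simp [hξ0, hc0]
    rw [hξ k hk]
    refine (norm_div_mul_exp_le (τ := τ) hγ (sum_abs_intCast_pos hk) ?_).trans ?_
    · refine four_mul_le_norm_one_sub_exp_of_le_abs_sub_int fun p => ?_
      simpa only [mul_comm] using hdio k hk p
    · gcongr
      exact le_ciSup ⟨_, Set.forall_mem_range.2 hM⟩ ⟨k, hk⟩
  have hbound := tsum_le_mul_tsum_of_le (fun k => by positivity) hsum hpoint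
  refine ⟨hbound, hbound.trans (mul_le_mul_of_nonneg_right ?_ (tsum_nonneg fun k =>
    mul_nonneg (norm_nonneg (c k)) (exp_pos _).le))⟩
  calc γ⁻¹ * S / 4 ≤ γ⁻¹ * ((τ / (2 * π * exp 1)) ^ τ / δ ^ τ) / 4 := by
        gcongr
        -- `Real.iSup_le` rather than `ciSup_le`: the index type is empty when `d = 0`
        exact Real.iSup_le hM (by positivity)
    _ = _ := by ring

/-- Rüssmann estimate in the Fourier norm for the termwise solution of the
cohomological equation, together with the explicit `(τ/(2πe))^τ/(4γδ^τ)` bound. -/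
theorem stmt13 (d : ℕ) (hd : 0 < d) (γ τ ρ δ : ℝ) (hγ : 0 < γ) (hτ : (d : ℝ) ≤ τ)
    (hδ : 0 < δ) (hδρ : δ < ρ)
    (ω : Fin d → ℝ)
    (hdio : ∀ q : Fin d → ℤ, q ≠ 0 → ∀ p : ℤ,
      γ / (∑ ℓ, |(q ℓ : ℝ)|) ^ τ ≤ |(∑ ℓ, ω ℓ * q ℓ) - p|)
    (c : (Fin d → ℤ) → ℂ) (hc0 : c 0 = 0)
    (hsum : Summable fun k : Fin d → ℤ =>
      ‖c k‖ * Real.exp (2 * Real.pi * (∑ ℓ, |(k ℓ : ℝ)|) * ρ))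
    (ξ : (Fin d → ℤ) → ℂ) (hξ0 : ξ 0 = 0)
    (hξ : ∀ k : Fin d → ℤ, k ≠ 0 →
      ξ k = c k / (1 - Complex.exp (2 * Real.pi * Complex.I * (∑ ℓ, (k ℓ : ℝ) * ω ℓ)))) :
    (∑' k : Fin d → ℤ, ‖ξ k‖ * Real.exp (2 * Real.pi * (∑ ℓ, |(k ℓ : ℝ)|) * (ρ - δ)))
      ≤ (γ⁻¹ * (⨆ k : {k : Fin d → ℤ // k ≠ 0},
              (∑ ℓ, |((k : Fin d → ℤ) ℓ : ℝ)|) ^ τ *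
                Real.exp (-2 * Real.pi * (∑ ℓ, |((k : Fin d → ℤ) ℓ : ℝ)|) * δ)) / 4) *
          ∑' k : Fin d → ℤ, ‖c k‖ * Real.exp (2 * Real.pi * (∑ ℓ, |(k ℓ : ℝ)|) * ρ) ∧
    (∑' k : Fin d → ℤ, ‖ξ k‖ * Real.exp (2 * Real.pi * (∑ ℓ, |(k ℓ : ℝ)|) * (ρ - δ)))
      ≤ ((τ / (2 * Real.pi * Real.exp 1)) ^ τ / (4 * γ * δ ^ τ)) *
          ∑' k : Fin d → ℤ, ‖c k‖ * Real.exp (2 * Real.pi * (∑ ℓ, |(k ℓ : ℝ)|) * ρ) :=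
  stmt13_general d γ τ ρ δ hγ hτ hδ ω hdio c hc0 hsum ξ hξ0 hξ
end
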